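/- arXiv:2604.04296 — 2 statements merged into one kernel-verified Lean document; each statement's English description precedes it below -/
import Mathlib

section
/- Let f : I → ℝ² be a circuit and u, v ∈ f(I) distinct points. Then there exist arcs g, h : I → ℝ² such that the interiors g⁰ and h⁰ are disjoint, g(I) ∪ h(I) = f(I), and both g and h have endpoint set {u, v}. -/
/-- A circuit: a continuous map on `[a,b]` (with `a < b`) such that
`f x = f y` for `x ≠ y` iff `{x, y} = {a, b}`. -/
def IsCircuit (f : ℝ → ℝ × ℝ) (a b : ℝ) : Prop :=
  a < b ∧ ContinuousOn f (Set.Icc a b) ∧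
    ∀ x ∈ Set.Icc a b, ∀ y ∈ Set.Icc a b, x ≠ y →
      (f x = f y ↔ ({x, y} : Set ℝ) = {a, b})

/-- An arc on `[a,b]`: a continuous injection. -/
def IsArc (f : ℝ → ℝ × ℝ) (a b : ℝ) : Prop :=
  a < b ∧ ContinuousOn f (Set.Icc a b) ∧ Set.InjOn f (Set.Icc a b)

/-!
Since `f a = f b` and `f` is injective on `[a, b)`, `f` descends to a continuous injection of the
circle `ℝ / (b - a)ℤ`, i.e. it extends to a continuous `(b - a)`-periodic map `F` that is injective
on every half-open period. Writing `u = F s`, `v = F t` with `s < t < s + (b - a)`, the two arcs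
are `F` on `[s, t]` and on `[t, s + (b - a)]`, affinely reparametrized to `[a, b]`: their
interiors lie in the single period `[s, s + (b - a))`, where they are disjoint, and together they
cover a full period.
-/

open Set Function

section Reparam

/-- The affine map with `a ↦ p` and `b ↦ q`, written as `k * x + c` to match
`Set.image_affine_Icc'`. -/
noncomputable def affineReparam (a b p q : ℝ) : ℝ → ℝ :=
  fun x => (q - p) / (b - a) * x + (p - (q - p) / (b - a) * a)

variable {a b p q : ℝ}

lemma affineReparam_left : affineReparam a b p q a = p := by
  simp [affineReparam]

lemma affineReparam_right (hab : a < b) : affineReparam a b p q b = q := by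
  simp only [affineReparam]
  field_simp [(sub_pos.2 hab).ne']
  ring

lemma continuous_affineReparam : Continuous (affineReparam a b p q) := by
  unfold affineReparam; fun_prop

lemma affineReparam_injective (hab : a < b) (hpq : p < q) :
    Injective (affineReparam a b p q) := by
  intro x y hxy
  simpa [affineReparam, (div_pos (sub_pos.2 hpq) (sub_pos.2 hab)).ne'] using hxy

lemma image_affineReparam_Icc (hab : a < b) (hpq : p < q) :
    affineReparam a b p q '' Icc a b = Icc p q := by
  unfold affineReparam
  rw [image_affine_Icc' (div_pos (sub_pos.2 hpq) (sub_pos.2 hab))]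
  congr 1 <;> field_simp [(sub_pos.2 hab).ne'] <;> ring

lemma image_affineReparam_Ioo (hab : a < b) (hpq : p < q) :
    affineReparam a b p q '' Ioo a b = Ioo p q := by
  unfold affineReparam
  rw [image_affine_Ioo (div_pos (sub_pos.2 hpq) (sub_pos.2 hab))]
  congr 1 <;> field_simp [(sub_pos.2 hab).ne'] <;> ring

end Reparam

lemma isArc_comp_affineReparam {F : ℝ → ℝ × ℝ} {a b p q : ℝ} (hab : a < b) (hpq : p < q)
    (hc : ContinuousOn F (Icc p q)) (hinj : InjOn F (Icc p q)) :
    IsArc (F ∘ affineReparam a b p q) a b := by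
  have hmaps : MapsTo (affineReparam a b p q) (Icc a b) (Icc p q) := by
    rw [← image_affineReparam_Icc hab hpq]; exact mapsTo_image _ _
  exact ⟨hab, hc.comp continuous_affineReparam.continuousOn hmaps,
    hinj.comp (affineReparam_injective hab hpq).injOn hmaps⟩

theorem exists_periodic_extension {X : Type*} [TopologicalSpace X] {f : ℝ → X} {a b : ℝ}
    (hab : a < b) (hc : ContinuousOn f (Icc a b)) (hend : f a = f b) (hinj : InjOn f (Ico a b)) :
    ∃ F : ℝ → X, Continuous F ∧ Periodic F (b - a) ∧ EqOn F f (Icc a b) ∧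
      ∀ p, InjOn F (Ico p (p + (b - a))) := by
  have : Fact (0 < b - a) := ⟨sub_pos.2 hab⟩
  rw [← add_sub_cancel a b] at hc hend hinj
  set φ := AddCircle.liftIco (b - a) a f
  have hφ : Injective φ :=
    hinj.injective.comp (AddCircle.equivIco (b - a) a).injective
  refine ⟨fun x => φ x, (AddCircle.liftIco_continuous hend hc).comp continuous_quotient_mk',
    fun x => by simp, fun x hx => ?_, fun p x hx y hy hxy => ?_⟩
  · rcases hx.2.lt_or_eq with hxb | rfl
    · exact AddCircle.liftIco_coe_apply ⟨hx.1, by rwa [add_sub_cancel]⟩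
    · have hb : ((x : ℝ) : AddCircle (x - a)) = a := by
        simpa using AddCircle.coe_add_period (p := x - a) a
      show φ x = f x
      rw [hb]
      exact (AddCircle.liftIco_coe_apply (left_mem_Ico.2 (lt_add_of_pos_right a this.out))).trans
        (by rw [hend, add_sub_cancel])
  · exact (AddCircle.coe_eq_coe_iff_of_mem_Ico hx hy).1 (hφ hxy)

theorem exists_arcs_of_periodic {F : ℝ → ℝ × ℝ} {L : ℝ} (hF : Continuous F) (hper : Periodic F L)
    (hinj : ∀ p, InjOn F (Ico p (p + L))) {s t : ℝ} (hst : s < t) (hts : t < s + L) {a b : ℝ}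
    (hab : a < b) :
    ∃ g h : ℝ → ℝ × ℝ, IsArc g a b ∧ IsArc h a b ∧
      g '' Ioo a b ∩ h '' Ioo a b = ∅ ∧ g '' Icc a b ∪ h '' Icc a b = range F ∧
      ({g a, g b} : Set (ℝ × ℝ)) = {F s, F t} ∧ ({h a, h b} : Set (ℝ × ℝ)) = {F s, F t} := by
  have hL : 0 < L := by linarith
  refine ⟨F ∘ affineReparam a b s t, F ∘ affineReparam a b t (s + L),
    isArc_comp_affineReparam hab hst hF.continuousOn ((hinj s).mono (Icc_subset_Ico_right hts)),
    isArc_comp_affineReparam hab hts hF.continuousOn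
      ((hinj t).mono (Icc_subset_Ico_right (by linarith))), ?_, ?_, ?_, ?_⟩
  · rw [image_comp, image_comp, image_affineReparam_Ioo hab hst, image_affineReparam_Ioo hab hts,
      ← disjoint_iff_inter_eq_empty]
    exact (Ioo_disjoint_Ioo.2 (by simp [hst.le])).image (hinj s)
      (Ioo_subset_Ico_self.trans (Ico_subset_Ico_right hts.le))
      (Ioo_subset_Ico_self.trans (Ico_subset_Ico_left hst.le))
  · rw [image_comp, image_comp, image_affineReparam_Icc hab hst, image_affineReparam_Icc hab hts,
      ← image_union, Icc_union_Icc_eq_Icc hst.le hts.le, hper.image_Icc hL]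
  · simp [affineReparam_left, affineReparam_right hab]
  · simp [affineReparam_left, affineReparam_right hab, hper s, pair_comm]

namespace IsCircuit

variable {f : ℝ → ℝ × ℝ} {a b : ℝ}

lemma apply_left_eq_apply_right (hf : IsCircuit f a b) : f a = f b :=
  (hf.2.2 a (left_mem_Icc.2 hf.1.le) b (right_mem_Icc.2 hf.1.le) hf.1.ne).2 rfl

lemma injOn_Ico (hf : IsCircuit f a b) : InjOn f (Ico a b) := by
  intro x hx y hy hxy
  by_contra hne
  have hb : b ∈ ({x, y} : Set ℝ) := by
    rw [(hf.2.2 x (Ico_subset_Icc_self hx) y (Ico_subset_Icc_self hy) hne).1 hxy]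
    exact mem_insert_of_mem _ rfl
  rcases hb with rfl | rfl
  · exact hx.2.false
  · exact hy.2.false

end IsCircuit

/-- Two distinct points of a circuit divide it into two arcs with disjoint
interiors whose union is the circuit and whose endpoint sets are `{u, v}`. -/
theorem circuit_split (f : ℝ → ℝ × ℝ) (a b : ℝ) (hf : IsCircuit f a b)
    (u v : ℝ × ℝ) (hu : u ∈ f '' Set.Icc a b) (hv : v ∈ f '' Set.Icc a b)
    (huv : u ≠ v) :
    ∃ g h : ℝ → ℝ × ℝ, IsArc g a b ∧ IsArc h a b ∧
      (g '' Set.Ioo a b) ∩ (h '' Set.Ioo a b) = ∅ ∧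
      g '' Set.Icc a b ∪ h '' Set.Icc a b = f '' Set.Icc a b ∧
      ({g a, g b} : Set (ℝ × ℝ)) = {u, v} ∧
      ({h a, h b} : Set (ℝ × ℝ)) = {u, v} := by
  obtain ⟨s, hs, rfl⟩ := hu
  obtain ⟨t, ht, rfl⟩ := hv
  wlog hst : s < t generalizing s t
  · simpa only [pair_comm] using this t ht s hs huv.symm
      (lt_of_le_of_ne (not_lt.1 hst) fun hts_eq => huv (hts_eq ▸ rfl))
  obtain ⟨F, hF, hper, hFf, hinj⟩ := exists_periodic_extension hf.1 hf.2.1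
    hf.apply_left_eq_apply_right hf.injOn_Ico
  have hts : t < s + (b - a) := by
    refine lt_of_le_of_ne (by linarith [hs.1, ht.2]) fun heq => huv ?_
    rw [show s = a by linarith [hs.1, ht.2], show t = b by linarith [hs.1, ht.2]]
    exact hf.apply_left_eq_apply_right
  obtain ⟨g, h, hg, hh, hdisj, hunion, hgab, hhab⟩ :=
    exists_arcs_of_periodic hF hper hinj hst hts hf.1
  refine ⟨g, h, hg, hh, hdisj, ?_, ?_, ?_⟩
  · rw [hunion, ← hper.image_Icc (sub_pos.2 hf.1) a, add_sub_cancel, hFf.image_eq]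
  · rwa [hFf hs, hFf ht] at hgab
  · rwa [hFf hs, hFf ht] at hhab
end

section
/- Let f : [a,b] → ℝ² be a non-closed PL map and let c be a point strictly between the vertical lines through f(a) and f(b), not on f([a,b]), and lying strictly below every point of the intersection of the vertical line x = c.1 with f([a,b]). Then the parity N(c, f) equals 1. -/
/-- A PL map on `[a,b]`: affine and nonconstant on each piece of a finite
partition of `[a,b]`. -/
def IsPLMap (f : ℝ → ℝ × ℝ) (a b : ℝ) : Prop :=
  ∃ (k : ℕ) (t : ℕ → ℝ), 0 < k ∧ t 0 = a ∧ t k = b ∧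
    (∀ i < k, t i < t (i + 1)) ∧
    ∀ i < k, ∃ u v : ℝ × ℝ, v ≠ 0 ∧
      ∀ x ∈ Set.Icc (t i) (t (i + 1)), f x = u + x • v

/-- The vertical half-line going up from `c`. -/
def upHalfLine (c : ℝ × ℝ) : Set (ℝ × ℝ) := {p | p.1 = c.1 ∧ c.2 ≤ p.2}

/-- `P(c,f)`: the preimage in `[a,b]` of the intersection of `ℓ(c)` with the
image of `f`. -/
def Pset (f : ℝ → ℝ × ℝ) (a b : ℝ) (c : ℝ × ℝ) : Set ℝ :=
  {t ∈ Set.Icc a b | f t ∈ upHalfLine c}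

/-- A simple component of `P(c,f)`: a connected component such that `f` lies
on opposite sides of `ℓ(c)` immediately before and after it. -/
def IsSimpleComponent (f : ℝ → ℝ × ℝ) (a b : ℝ) (c : ℝ × ℝ)
    (z : Set ℝ) : Prop :=
  (∃ t ∈ Pset f a b c, z = connectedComponentIn (Pset f a b c) t) ∧
  ∃ x y : ℝ, IsLeast z x ∧ IsGreatest z y ∧ ∃ ε > (0 : ℝ),
    ((∀ s ∈ Set.Ioo (x - ε) x, (f s).1 < c.1) ∧
      (∀ s ∈ Set.Ioo y (y + ε), c.1 < (f s).1)) ∨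
    ((∀ s ∈ Set.Ioo (x - ε) x, c.1 < (f s).1) ∧
      (∀ s ∈ Set.Ioo y (y + ε), (f s).1 < c.1))

/-- `N(c,f)`: the parity of the number of simple components of `P(c,f)`. -/
noncomputable def Nparity (f : ℝ → ℝ × ℝ) (a b : ℝ) (c : ℝ × ℝ) : ℕ :=
  (Set.ncard {z : Set ℝ | IsSimpleComponent f a b c z}) % 2

/-- `S(f)` for a non-closed map: the points off the image of `f` lying
strictly between the vertical lines through `f a` and `f b`. -/
def Sset (f : ℝ → ℝ × ℝ) (a b : ℝ) : Set (ℝ × ℝ) :=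
  {p | p ∉ f '' Set.Icc a b ∧
    min (f a).1 (f b).1 < p.1 ∧ p.1 < max (f a).1 (f b).1}

/-!
Under the hypothesis on `c`, `P(c,f)` is the level set `{s ∈ [a,b] | g s = c.1}` of the continuous
function `g = (f ·).1`, and a component of it is simple exactly when `g` crosses the level `c.1`
there. As `f` is PL, this level set is a finite union of intervals, so it has finitely many
components, each a compact interval. Sweeping from `a` to `b` and peeling off, at each point `r`
off the level set, the last component to the left of `r`, one sees that the number of crossing
components to the left of `r` is even iff `g a` and `g r` lie on the same side of `c.1`. At `r = b`
they lie on opposite sides, by the choice of `c`.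
-/

open Set Filter Topology

section Components

variable {X : Type*} [TopologicalSpace X] {K z w : Set X} {x : X}

def componentsIn (K : Set X) : Set (Set X) := {z | ∃ t ∈ K, z = connectedComponentIn K t}

theorem connectedComponentIn_mem_componentsIn (hx : x ∈ K) :
    connectedComponentIn K x ∈ componentsIn K :=
  ⟨x, hx, rfl⟩

theorem eq_connectedComponentIn_of_mem_componentsIn (hz : z ∈ componentsIn K) (hx : x ∈ z) :
    z = connectedComponentIn K x := by
  obtain ⟨t, -, rfl⟩ := hz
  exact connectedComponentIn_eq hx

theorem eq_of_mem_componentsIn (hz : z ∈ componentsIn K) (hw : w ∈ componentsIn K)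
    (hxz : x ∈ z) (hxw : x ∈ w) : z = w :=
  (eq_connectedComponentIn_of_mem_componentsIn hz hxz).trans
    (eq_connectedComponentIn_of_mem_componentsIn hw hxw).symm

theorem subset_of_mem_componentsIn (hz : z ∈ componentsIn K) : z ⊆ K := by
  obtain ⟨t, -, rfl⟩ := hz
  exact connectedComponentIn_subset K t

theorem nonempty_of_mem_componentsIn (hz : z ∈ componentsIn K) : z.Nonempty := by
  obtain ⟨t, ht, rfl⟩ := hz
  exact ⟨t, mem_connectedComponentIn ht⟩

theorem isPreconnected_of_mem_componentsIn (hz : z ∈ componentsIn K) : IsPreconnected z := by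
  obtain ⟨t, -, rfl⟩ := hz
  exact isPreconnected_connectedComponentIn

theorem IsClosed.connectedComponentIn (hK : IsClosed K) (x : X) :
    IsClosed (connectedComponentIn K x) := by
  by_cases hx : x ∈ K
  · refine isClosed_of_closure_subset ?_
    exact isPreconnected_connectedComponentIn.closure.subset_connectedComponentIn
      (subset_closure (mem_connectedComponentIn hx))
      (closure_minimal (connectedComponentIn_subset K x) hK)
  · rw [connectedComponentIn_eq_empty hx]
    exact isClosed_empty

theorem isClosed_of_mem_componentsIn (hK : IsClosed K) (hz : z ∈ componentsIn K) :
    IsClosed z := by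
  obtain ⟨t, -, rfl⟩ := hz
  exact hK.connectedComponentIn t

theorem isClosed_diff_of_mem_componentsIn (hK : IsClosed K) (hfin : (componentsIn K).Finite)
    (hz : z ∈ componentsIn K) : IsClosed (K \ z) := by
  have hunion : K \ z = ⋃ w ∈ componentsIn K \ {z}, w := by
    ext x
    simp only [Set.mem_sdiff, mem_iUnion, mem_singleton_iff, exists_prop]
    constructor
    · rintro ⟨hxK, hxz⟩
      exact ⟨_, ⟨connectedComponentIn_mem_componentsIn hxK,
        fun h => hxz (h ▸ mem_connectedComponentIn hxK)⟩, mem_connectedComponentIn hxK⟩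
    · rintro ⟨w, ⟨hw, hwz⟩, hxw⟩
      exact ⟨subset_of_mem_componentsIn hw hxw,
        fun hxz => hwz (eq_of_mem_componentsIn hw hz hxw hxz)⟩
  rw [hunion]
  exact hfin.sdiff.isClosed_biUnion fun w hw => isClosed_of_mem_componentsIn hK hw.1

theorem finite_componentsIn_of_eq_biUnion {ι : Type*} {I : Set ι} (hI : I.Finite)
    {P : ι → Set X} (hP : ∀ i ∈ I, IsPreconnected (P i)) (hK : K = ⋃ i ∈ I, P i) :
    (componentsIn K).Finite := by
  have hsub : ∀ i ∈ I, (connectedComponentIn K '' P i).Subsingleton := by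
    rintro i hi _ ⟨p, hp, rfl⟩ _ ⟨q, hq, rfl⟩
    have hPK : P i ⊆ K := hK ▸ subset_biUnion_of_mem hi
    exact connectedComponentIn_eq ((hP i hi).subset_connectedComponentIn hp hPK hq)
  refine (hI.biUnion fun i hi => (hsub i hi).finite).subset ?_
  rintro z ⟨x, hxK, rfl⟩
  rw [hK, mem_iUnion₂] at hxK
  obtain ⟨i, hi, hxi⟩ := hxK
  exact mem_biUnion hi (mem_image_of_mem _ hxi)

end Components

section RealComponents

variable {K z : Set ℝ} {r : ℝ}

def componentsBefore (K : Set ℝ) (r : ℝ) : Set (Set ℝ) := {z ∈ componentsIn K | sSup z < r}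

theorem isCompact_of_mem_componentsIn (hK : IsCompact K) (hz : z ∈ componentsIn K) :
    IsCompact z :=
  hK.of_isClosed_subset (isClosed_of_mem_componentsIn hK.isClosed hz)
    (subset_of_mem_componentsIn hz)

theorem isLeast_sInf_of_mem_componentsIn (hK : IsCompact K) (hz : z ∈ componentsIn K) :
    IsLeast z (sInf z) :=
  (isCompact_of_mem_componentsIn hK hz).isLeast_sInf (nonempty_of_mem_componentsIn hz)

theorem isGreatest_sSup_of_mem_componentsIn (hK : IsCompact K) (hz : z ∈ componentsIn K) :
    IsGreatest z (sSup z) :=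
  (isCompact_of_mem_componentsIn hK hz).isGreatest_sSup (nonempty_of_mem_componentsIn hz)

theorem Icc_subset_of_mem_componentsIn (hz : z ∈ componentsIn K) {x y : ℝ} (hx : x ∈ z)
    (hy : y ∈ z) : Icc x y ⊆ z :=
  (isPreconnected_of_mem_componentsIn hz).ordConnected.out hx hy

theorem sSup_lt_of_mem_componentsIn (hK : IsCompact K) (hz : z ∈ componentsIn K) {s : ℝ}
    (hs : s ∈ z) (hsr : s ≤ r) (hr : r ∉ K) : sSup z < r := by
  refine lt_of_not_ge fun hrz => hr ?_
  exact subset_of_mem_componentsIn hz <| Icc_subset_of_mem_componentsIn hz hs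
    (isGreatest_sSup_of_mem_componentsIn hK hz).1 ⟨hsr, hrz⟩

theorem exists_Ico_disjoint_of_mem_componentsIn (hK : IsCompact K)
    (hfin : (componentsIn K).Finite) (hz : z ∈ componentsIn K) {a : ℝ} (ha : a < sInf z) :
    ∃ l ∈ Ioo a (sInf z), ∀ s ∈ Ico l (sInf z), s ∉ K := by
  have hx : sInf z ∉ K \ z := fun h => h.2 (isLeast_sInf_of_mem_componentsIn hK hz).1
  have hnhds : (K \ z)ᶜ ∩ (Ioi a ∩ Iio (sInf z)) ∈ 𝓝[<] sInf z :=
    inter_mem (nhdsWithin_le_nhds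
      ((isClosed_diff_of_mem_componentsIn hK.isClosed hfin hz).isOpen_compl.mem_nhds hx))
      (inter_mem (nhdsWithin_le_nhds (Ioi_mem_nhds ha)) self_mem_nhdsWithin)
  obtain ⟨l, hl, hsub⟩ := mem_nhdsLT_iff_exists_Ico_subset.1 hnhds
  refine ⟨l, ⟨(hsub ⟨le_rfl, hl⟩).2.1, hl⟩, fun s hs hsK => ?_⟩
  obtain ⟨hsKz, -, hsx⟩ := hsub hs
  exact hsKz ⟨hsK, notMem_of_lt_csInf hsx
    (isLeast_sInf_of_mem_componentsIn hK hz).bddBelow⟩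

theorem notMem_of_componentsBefore_eq_empty (hK : IsCompact K) (hB : componentsBefore K r = ∅)
    (hr : r ∉ K) {s : ℝ} (hsr : s ≤ r) : s ∉ K := fun hs =>
  hB.subset ⟨connectedComponentIn_mem_componentsIn hs,
    sSup_lt_of_mem_componentsIn hK (connectedComponentIn_mem_componentsIn hs)
      (mem_connectedComponentIn hs) hsr hr⟩

theorem componentsBefore_eq_componentsIn (hK : IsCompact K) (hKr : K ⊆ Iic r) (hr : r ∉ K) :
    componentsBefore K r = componentsIn K :=
  sep_eq_self_iff_mem_true.2 fun _ hz =>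
    sSup_lt_of_mem_componentsIn hK hz (isGreatest_sSup_of_mem_componentsIn hK hz).1
      (hKr (subset_of_mem_componentsIn hz (isGreatest_sSup_of_mem_componentsIn hK hz).1)) hr

theorem notMem_of_forall_componentsBefore_sSup_le (hK : IsCompact K) (hr : r ∉ K) {y : ℝ}
    (hy : ∀ w ∈ componentsBefore K r, sSup w ≤ y) {s : ℝ} (hs : s ∈ Ioc y r) : s ∉ K := by
  intro hsK
  have hw := connectedComponentIn_mem_componentsIn hsK
  have hsw := mem_connectedComponentIn hsK
  have hwr : connectedComponentIn K s ∈ componentsBefore K r :=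
    ⟨hw, sSup_lt_of_mem_componentsIn hK hw hsw hs.2 hr⟩
  exact (hs.1.trans_le ((isGreatest_sSup_of_mem_componentsIn hK hw).2 hsw)).not_ge (hy _ hwr)

theorem componentsBefore_eq_sdiff_of_forall_sSup_le (hK : IsCompact K)
    (hz : z ∈ componentsBefore K r) (hmax : ∀ w ∈ componentsBefore K r, sSup w ≤ sSup z)
    {l : ℝ} (hl : l < sInf z) (hgap : ∀ s ∈ Ico l (sInf z), s ∉ K) :
    componentsBefore K l = componentsBefore K r \ {z} := by
  have hxz := isLeast_sInf_of_mem_componentsIn hK hz.1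
  have hyz := isGreatest_sSup_of_mem_componentsIn hK hz.1
  have hlz : l < sSup z := hl.trans_le (hxz.2 hyz.1)
  ext w
  constructor
  · rintro ⟨hw, hwl⟩
    exact ⟨⟨hw, hwl.trans (hlz.trans hz.2)⟩, fun h => (hwl.trans (h ▸ hlz)).false⟩
  · rintro ⟨⟨hw, hwr⟩, hwz⟩
    refine ⟨hw, lt_of_not_ge fun hlw => ?_⟩
    have hyw := isGreatest_sSup_of_mem_componentsIn hK hw
    rcases lt_or_ge (sSup w) (sInf z) with hlt | hge
    · exact hgap _ ⟨hlw, hlt⟩ (subset_of_mem_componentsIn hw hyw.1)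
    · have hmem : sSup w ∈ z :=
        Icc_subset_of_mem_componentsIn hz.1 hxz.1 hyz.1 ⟨hge, hmax w ⟨hw, hwr⟩⟩
      exact hwz (eq_of_mem_componentsIn hw hz.1 hyw.1 hmem)

end RealComponents

section Crossing

variable {g : ℝ → ℝ} {v : ℝ}

theorem lt_iff_lt_of_isPreconnected {S : Set ℝ} (hS : IsPreconnected S) (hg : ContinuousOn g S)
    (hv : ∀ s ∈ S, g s ≠ v) {x y : ℝ} (hx : x ∈ S) (hy : y ∈ S) : v < g x ↔ v < g y := by
  have key : ∀ x ∈ S, ∀ y ∈ S, v < g x → v < g y := fun x hx y hy hgx => by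
    by_contra! hgy
    obtain ⟨s, hs, hgs⟩ := hS.intermediate_value hy hx hg ⟨hgy, hgx.le⟩
    exact hv s hs hgs
  exact ⟨key x hx y hy, key y hy x hx⟩

def CrossesLevel (g : ℝ → ℝ) (v : ℝ) (z : Set ℝ) : Prop :=
  ∃ x y : ℝ, IsLeast z x ∧ IsGreatest z y ∧ ∃ ε > (0 : ℝ),
    ((∀ s ∈ Ioo (x - ε) x, g s < v) ∧ (∀ s ∈ Ioo y (y + ε), v < g s)) ∨
    ((∀ s ∈ Ioo (x - ε) x, v < g s) ∧ (∀ s ∈ Ioo y (y + ε), g s < v))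

theorem crossesLevel_iff {z : Set ℝ} {l x y r : ℝ} (hx : IsLeast z x) (hy : IsGreatest z y)
    (hl : l < x) (hr : y < r) (hgl : ContinuousOn g (Ico l x)) (hgr : ContinuousOn g (Ioc y r))
    (hvl : ∀ s ∈ Ico l x, g s ≠ v) (hvr : ∀ s ∈ Ioc y r, g s ≠ v) :
    CrossesLevel g v z ↔ ¬(v < g l ↔ v < g r) := by
  have signl : ∀ s ∈ Ico l x, v < g s ↔ v < g l := fun s hs =>
    lt_iff_lt_of_isPreconnected isPreconnected_Ico hgl hvl hs ⟨le_rfl, hl⟩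
  have signr : ∀ s ∈ Ioc y r, v < g s ↔ v < g r := fun s hs =>
    lt_iff_lt_of_isPreconnected isPreconnected_Ioc hgr hvr hs ⟨hr, le_rfl⟩
  constructor
  · rintro ⟨x', y', hx', hy', ε, hε, hcases⟩
    obtain rfl := hx'.unique hx
    obtain rfl := hy'.unique hy
    have hsl : max l (x' - ε) < x' := max_lt hl (by linarith)
    have hsr : y' < min r (y' + ε) := lt_min hr (by linarith)
    obtain ⟨sl, hsl1, hsl2⟩ := exists_between hsl
    obtain ⟨sr, hsr1, hsr2⟩ := exists_between hsr
    have hslI : sl ∈ Ico l x' := ⟨(le_max_left _ _).trans hsl1.le, hsl2⟩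
    have hsrI : sr ∈ Ioc y' r := ⟨hsr1, hsr2.le.trans (min_le_left _ _)⟩
    have hslε : sl ∈ Ioo (x' - ε) x' := ⟨(le_max_right _ _).trans_lt hsl1, hsl2⟩
    have hsrε : sr ∈ Ioo y' (y' + ε) := ⟨hsr1, hsr2.trans_le (min_le_right _ _)⟩
    rw [← signl sl hslI, ← signr sr hsrI]
    rcases hcases with ⟨hL, hR⟩ | ⟨hL, hR⟩
    · exact fun h => (hL sl hslε).not_gt (h.2 (hR sr hsrε))
    · exact fun h => (hR sr hsrε).not_gt (h.1 (hL sl hslε))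
  · intro hne
    refine ⟨x, y, hx, hy, min (x - l) (r - y), lt_min (by linarith) (by linarith), ?_⟩
    have hIl : ∀ s ∈ Ioo (x - min (x - l) (r - y)) x, s ∈ Ico l x := fun s hs =>
      ⟨by linarith [hs.1, min_le_left (x - l) (r - y)], hs.2⟩
    have hIr : ∀ s ∈ Ioo y (y + min (x - l) (r - y)), s ∈ Ioc y r := fun s hs =>
      ⟨hs.1, by linarith [hs.2, min_le_right (x - l) (r - y)]⟩
    by_cases hgl : v < g l
    · have hgr : ¬v < g r := fun h => hne (iff_of_true hgl h)
      refine Or.inr ⟨fun s hs => (signl s (hIl s hs)).2 hgl, fun s hs => ?_⟩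
      exact (hvr s (hIr s hs)).lt_of_le (not_lt.1 fun h => hgr ((signr s (hIr s hs)).1 h))
    · have hgr : v < g r := by_contra fun h => hne (iff_of_false hgl h)
      refine Or.inl ⟨fun s hs => ?_, fun s hs => (signr s (hIr s hs)).2 hgr⟩
      exact (hvl s (hIl s hs)).lt_of_le (not_lt.1 fun h => hgl ((signl s (hIl s hs)).1 h))

end Crossing

theorem even_ncard_sep_iff {α : Type*} {S : Set α} (hS : S.Finite) {z : α} (hz : z ∈ S)
    (P : α → Prop) : Even {w ∈ S | P w}.ncard ↔ (Even {w ∈ S \ {z} | P w}.ncard ↔ ¬P z) := by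
  have hsep : {w ∈ S \ {z} | P w} = {w ∈ S | P w} \ {z} := by
    ext w
    simp only [mem_sep_iff, Set.mem_sdiff]
    exact and_right_comm
  rw [hsep]
  by_cases hPz : P z
  · rw [← ncard_sdiff_singleton_add_one (s := {w ∈ S | P w}) ⟨hz, hPz⟩ (hS.subset (sep_subset _ _)),
      Nat.even_add_one]
    tauto
  · rw [sdiff_singleton_eq_self fun h => hPz h.2]
    tauto

section LevelCrossings

variable {g : ℝ → ℝ} {a b v : ℝ}

theorem isCompact_levelSet (hg : ContinuousOn g (Icc a b)) :
    IsCompact {s ∈ Icc a b | g s = v} :=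
  isCompact_Icc.of_isClosed_subset
    (hg.preimage_isClosed_of_isClosed isClosed_Icc isClosed_singleton) (sep_subset _ _)

theorem exists_componentsBefore_eq_sdiff_and_crossesLevel_iff (hg : ContinuousOn g (Icc a b))
    (hfin : (componentsIn {s ∈ Icc a b | g s = v}).Finite) (ha : g a ≠ v) {r : ℝ}
    (hrb : r ≤ b) (hgr : g r ≠ v) {z : Set ℝ}
    (hz : z ∈ componentsBefore {s ∈ Icc a b | g s = v} r)
    (hmax : ∀ w ∈ componentsBefore {s ∈ Icc a b | g s = v} r, sSup w ≤ sSup z) :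
    ∃ l ∈ Icc a b, g l ≠ v ∧
      componentsBefore {s ∈ Icc a b | g s = v} l =
        componentsBefore {s ∈ Icc a b | g s = v} r \ {z} ∧
      (CrossesLevel g v z ↔ ¬(v < g l ↔ v < g r)) := by
  set K := {s ∈ Icc a b | g s = v}
  have hK : IsCompact K := isCompact_levelSet hg
  have hxz := isLeast_sInf_of_mem_componentsIn hK hz.1
  have hyz := isGreatest_sSup_of_mem_componentsIn hK hz.1
  have hxK : sInf z ∈ K := subset_of_mem_componentsIn hz.1 hxz.1
  have hax : a < sInf z := lt_of_le_of_ne hxK.1.1 fun h => ha (h ▸ hxK.2)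
  obtain ⟨l, ⟨hal, hlx⟩, hgap⟩ := exists_Ico_disjoint_of_mem_componentsIn hK hfin hz.1 hax
  have hlI : Icc l (sInf z) ⊆ Icc a b := Icc_subset_Icc hal.le hxK.1.2
  have hrI : Icc (sSup z) r ⊆ Icc a b :=
    Icc_subset_Icc ((subset_of_mem_componentsIn hz.1 hyz.1).1.1) hrb
  have hl : l ∈ Icc a b := hlI ⟨le_rfl, hlx.le⟩
  refine ⟨l, hl, fun h => hgap l ⟨le_rfl, hlx⟩ ⟨hl, h⟩,
    componentsBefore_eq_sdiff_of_forall_sSup_le hK hz hmax hlx hgap, ?_⟩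
  exact crossesLevel_iff hxz hyz hlx hz.2 (hg.mono (Ico_subset_Icc_self.trans hlI))
    (hg.mono (Ioc_subset_Icc_self.trans hrI))
    (fun s hs h => hgap s hs ⟨hlI (Ico_subset_Icc_self hs), h⟩)
    (fun s hs h => notMem_of_forall_componentsBefore_sSup_le hK (fun h => hgr h.2) hmax hs
      ⟨hrI (Ioc_subset_Icc_self hs), h⟩)

theorem even_ncard_crossesLevel_before_iff (hg : ContinuousOn g (Icc a b))
    (hfin : (componentsIn {s ∈ Icc a b | g s = v}).Finite) (ha : g a ≠ v) {r : ℝ}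
    (hr : r ∈ Icc a b) (hgr : g r ≠ v) :
    Even {z ∈ componentsBefore {s ∈ Icc a b | g s = v} r | CrossesLevel g v z}.ncard ↔
      (v < g a ↔ v < g r) := by
  set K := {s ∈ Icc a b | g s = v}
  have hK : IsCompact K := isCompact_levelSet hg
  have hBfin : ∀ r, (componentsBefore K r).Finite := fun r => hfin.subset (sep_subset _ _)
  induction hn : (componentsBefore K r).ncard using Nat.strong_induction_on generalizing r with
  | _ n ih =>
  rcases (componentsBefore K r).eq_empty_or_nonempty with hB | hB
  · rw [hB, sep_empty, ncard_empty]
    refine iff_of_true Even.zero (lt_iff_lt_of_isPreconnected isPreconnected_Icc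
      (hg.mono (Icc_subset_Icc_right hr.2)) (fun s hs hgs => ?_) ⟨le_rfl, hr.1⟩ ⟨hr.1, le_rfl⟩)
    exact notMem_of_componentsBefore_eq_empty hK hB (fun h => hgr h.2) hs.2
      ⟨⟨hs.1, hs.2.trans hr.2⟩, hgs⟩
  obtain ⟨z, hz, hmax⟩ := exists_max_image _ sSup (hBfin r) hB
  obtain ⟨l, hl, hgl, hBl, hcross⟩ :=
    exists_componentsBefore_eq_sdiff_and_crossesLevel_iff hg hfin ha hr.2 hgr hz hmax
  have hlt : (componentsBefore K l).ncard < n := by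
    rw [hBl, ← hn]
    exact ncard_sdiff_singleton_lt_of_mem hz (hBfin r)
  have IH := ih _ hlt hl hgl rfl
  rw [even_ncard_sep_iff (hBfin r) hz, ← hBl, hcross]
  tauto

theorem even_ncard_crossesLevel_iff (hab : a ≤ b) (hg : ContinuousOn g (Icc a b))
    (hfin : (componentsIn {s ∈ Icc a b | g s = v}).Finite) (ha : g a ≠ v) (hb : g b ≠ v) :
    Even {z ∈ componentsIn {s ∈ Icc a b | g s = v} | CrossesLevel g v z}.ncard ↔
      (v < g a ↔ v < g b) := by
  rw [← componentsBefore_eq_componentsIn (isCompact_levelSet hg) (fun s hs => hs.1.2)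
    fun h => hb h.2]
  exact even_ncard_crossesLevel_before_iff hg hfin ha ⟨hab, le_rfl⟩ hb

end LevelCrossings

theorem Icc_eq_biUnion_Icc_succ {α : Type*} [LinearOrder α] {t : ℕ → α} {n : ℕ} (hn : 0 < n)
    (ht : ∀ i < n, t i ≤ t (i + 1)) : Icc (t 0) (t n) = ⋃ i < n, Icc (t i) (t (i + 1)) := by
  have hmono : MonotoneOn t (Iic n) := monotoneOn_of_le_succ ordConnected_Iic
    fun i _ _ hi => by
      rw [Order.succ_eq_add_one] at hi ⊢
      exact ht i hi
  induction n, hn using Nat.le_induction with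
  | base => simp
  | succ n hn ih =>
    rw [biUnion_lt_succ,
      ← ih (fun i hi => ht i (by omega)) (hmono.mono (Iic_subset_Iic.2 (by omega))),
      Icc_union_Icc_eq_Icc (hmono (by simp) (by simp) (Nat.zero_le n)) (ht n (by omega))]

theorem continuousOn_biUnion_lt_of_isClosed {X Y : Type*} [TopologicalSpace X]
    [TopologicalSpace Y] {f : X → Y} {s : ℕ → Set X} :
    ∀ n : ℕ, (∀ i < n, IsClosed (s i)) → (∀ i < n, ContinuousOn f (s i)) →
      ContinuousOn f (⋃ i < n, s i)
  | 0, _, _ => by simp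
  | n + 1, hs, hf => by
    rw [biUnion_lt_succ]
    exact (continuousOn_biUnion_lt_of_isClosed n (fun i hi => hs i (by omega))
      fun i hi => hf i (by omega)).union_of_isClosed (hf n (by omega))
      ((finite_lt_nat n).isClosed_biUnion fun i hi => hs i (by simp at hi; omega))
      (hs n (by omega))

theorem ordConnected_setOf_add_mul_eq (p q v : ℝ) : OrdConnected {s : ℝ | p + s * q = v} := by
  refine ⟨fun x hx y hy s hs => ?_⟩
  rcases eq_or_ne q 0 with rfl | hq
  · simpa using hx
  · have hxy : x = y := mul_right_cancel₀ hq (by linarith [hx.out, hy.out])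
    obtain rfl : s = x := le_antisymm (hxy ▸ hs.2) hs.1
    exact hx

namespace IsPLMap

variable {f : ℝ → ℝ × ℝ} {a b : ℝ}

theorem exists_affine_cover (h : IsPLMap f a b) :
    a ≤ b ∧ ∃ (k : ℕ) (t : ℕ → ℝ), Icc a b = ⋃ i < k, Icc (t i) (t (i + 1)) ∧
      ∀ i < k, ∃ u w : ℝ × ℝ, ∀ x ∈ Icc (t i) (t (i + 1)), f x = u + x • w := by
  obtain ⟨k, t, hk, rfl, rfl, ht, haff⟩ := h
  have hcover := Icc_eq_biUnion_Icc_succ hk fun i hi => (ht i hi).le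
  have hmem : t 0 ∈ Icc (t 0) (t k) := hcover ▸ mem_biUnion hk ⟨le_rfl, (ht 0 hk).le⟩
  refine ⟨hmem.2, k, t, hcover, fun i hi => ?_⟩
  obtain ⟨u, w, -, huw⟩ := haff i hi
  exact ⟨u, w, huw⟩

theorem le (h : IsPLMap f a b) : a ≤ b :=
  h.exists_affine_cover.1

theorem continuousOn (h : IsPLMap f a b) : ContinuousOn f (Icc a b) := by
  obtain ⟨-, k, t, hcover, haff⟩ := h.exists_affine_cover
  rw [hcover]
  refine continuousOn_biUnion_lt_of_isClosed k (fun _ _ => isClosed_Icc) fun i hi => ?_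
  obtain ⟨u, w, huw⟩ := haff i hi
  exact (continuous_const.add (continuous_id.smul continuous_const)).continuousOn.congr huw

theorem finite_componentsIn_levelSet (h : IsPLMap f a b) (v : ℝ) :
    (componentsIn {s ∈ Icc a b | (f s).1 = v}).Finite := by
  obtain ⟨-, k, t, hcover, haff⟩ := h.exists_affine_cover
  refine finite_componentsIn_of_eq_biUnion (finite_lt_nat k)
    (P := fun i => Icc (t i) (t (i + 1)) ∩ {s | (f s).1 = v}) (fun i hi => ?_)
    (by rw [hcover]; exact iUnion₂_inter _ _)
  obtain ⟨u, w, huw⟩ := haff i hi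
  have hpiece : Icc (t i) (t (i + 1)) ∩ {s | (f s).1 = v} =
      Icc (t i) (t (i + 1)) ∩ {s | u.1 + s * w.1 = v} := by
    ext s
    simp only [mem_inter_iff, mem_ofPred_eq]
    exact and_congr_right fun hs => by simp [huw s hs]
  rw [hpiece]
  exact (ordConnected_Icc.inter (ordConnected_setOf_add_mul_eq _ _ _)).isPreconnected

end IsPLMap

theorem Pset_eq_levelSet {f : ℝ → ℝ × ℝ} {a b : ℝ} {c : ℝ × ℝ}
    (hbelow : ∀ p ∈ f '' Icc a b, p.1 = c.1 → c.2 < p.2) :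
    Pset f a b c = {s ∈ Icc a b | (f s).1 = c.1} := by
  ext s
  simp only [Pset, upHalfLine, mem_ofPred_eq]
  exact and_congr_right fun hs =>
    and_iff_left_of_imp fun he => (hbelow _ (mem_image_of_mem f hs) he).le

theorem setOf_isSimpleComponent_eq {f : ℝ → ℝ × ℝ} {a b : ℝ} {c : ℝ × ℝ}
    (hbelow : ∀ p ∈ f '' Icc a b, p.1 = c.1 → c.2 < p.2) :
    {z | IsSimpleComponent f a b c z} =
      {z ∈ componentsIn {s ∈ Icc a b | (f s).1 = c.1} | CrossesLevel (fun s => (f s).1) c.1 z} := by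
  ext z
  simp only [IsSimpleComponent, Pset_eq_levelSet hbelow]
  rfl

theorem ne_and_ne_and_not_iff_of_min_lt_of_lt_max {x y v : ℝ} (hmin : min x y < v)
    (hmax : v < max x y) : x ≠ v ∧ y ≠ v ∧ ¬(v < x ↔ v < y) := by
  rcases le_total x y with hxy | hxy
  · rw [min_eq_left hxy] at hmin
    rw [max_eq_right hxy] at hmax
    exact ⟨hmin.ne, hmax.ne', fun h => hmin.not_gt (h.2 hmax)⟩
  · rw [min_eq_right hxy] at hmin
    rw [max_eq_left hxy] at hmax
    exact ⟨hmax.ne', hmin.ne, fun h => hmin.not_gt (h.1 hmax)⟩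

theorem Nparity_eq_one_general (f : ℝ → ℝ × ℝ) (a b : ℝ) (h : IsPLMap f a b)
    (c : ℝ × ℝ) (hc : c ∈ Sset f a b)
    (hbelow : ∀ p ∈ f '' Set.Icc a b, p.1 = c.1 → c.2 < p.2) :
    Nparity f a b c = 1 := by
  obtain ⟨-, hmin, hmax⟩ := hc
  obtain ⟨ha, hb, hsign⟩ := ne_and_ne_and_not_iff_of_min_lt_of_lt_max hmin hmax
  have hparity := even_ncard_crossesLevel_iff h.le (continuous_fst.comp_continuousOn h.continuousOn)
    (h.finite_componentsIn_levelSet c.1) ha hb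
  rw [Nparity, setOf_isSimpleComponent_eq hbelow]
  exact Nat.odd_iff.1 (Nat.not_even_iff_odd.1 fun he => hsign (hparity.1 he))

/-- If `c ∈ S(f)` lies strictly below every intersection of the vertical line
through `c` with the image of `f`, then `N(c,f) = 1`. -/
theorem Nparity_eq_one (f : ℝ → ℝ × ℝ) (a b : ℝ) (h : IsPLMap f a b)
    (hnc : f a ≠ f b) (c : ℝ × ℝ) (hc : c ∈ Sset f a b)
    (hbelow : ∀ p ∈ f '' Set.Icc a b, p.1 = c.1 → c.2 < p.2) :
    Nparity f a b c = 1 :=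
  Nparity_eq_one_general f a b h c hc hbelow
end
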